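/- Let V be a finite-dimensional subspace of continuous real-valued functions on a topological space M such that every nonzero element of V has zero set with empty interior. Let U ⊆ M be a nonempty open set. Then the restriction-pairing map T : C_c(U) → V*, given by T(f)(v) = ∫_U f·v (with respect to a Borel measure of full support), is surjective onto the dual V*. -/
import Mathlib

open MeasureTheory

/-- Let `V` be a finite-dimensional space of continuous functions on `M` whose
nonzero elements have zero sets with empty interior, and let `μ` be a Borel
measure with full support (finite on compacts). Then for every nonempty open
`U ⊆ M`, the pairing map `C_c(U) → V*`, `f ↦ (v ↦ ∫ f·v dμ)`, is surjective:
every linear functional `L` on `V` is of this form. -/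
theorem stmt12 {M : Type*} [TopologicalSpace M] [LocallyCompactSpace M] [T2Space M]
    [MeasurableSpace M] [BorelSpace M]
    (μ : Measure M) [IsFiniteMeasureOnCompacts μ]
    (hfull : ∀ W : Set M, IsOpen W → W.Nonempty → 0 < μ W)
    (V : Subspace ℝ C(M, ℝ)) [FiniteDimensional ℝ V]
    (hnodal : ∀ v : V, v ≠ 0 → interior {x : M | (v : C(M, ℝ)) x = 0} = ∅)
    (U : Set M) (hU : IsOpen U) (hUne : U.Nonempty)
    (L : Module.Dual ℝ V) :
    ∃ f : C(M, ℝ), HasCompactSupport f ∧ tsupport f ⊆ U ∧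
      ∀ v : V, (∫ x, f x * (v : C(M, ℝ)) x ∂μ) = L v := by
  classical
  -- integrability of f·v when f has compact support
  have key : ∀ (f : C(M, ℝ)), HasCompactSupport f → ∀ v : V,
      Integrable (fun x => f x * (v : C(M, ℝ)) x) μ := fun f hf v =>
    (f.continuous.mul (v : C(M, ℝ)).continuous).integrable_of_hasCompactSupport hf.mul_right
  -- the pairing functional associated to a compactly supported f
  let T : ∀ (f : C(M, ℝ)), HasCompactSupport f → Module.Dual ℝ V := fun f hf =>
    { toFun := fun v => ∫ x, f x * (v : C(M, ℝ)) x ∂μ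
      map_add' := by
        intro v w
        simp only [Submodule.coe_add, ContinuousMap.add_apply, mul_add]
        exact integral_add (key f hf v) (key f hf w)
      map_smul' := by
        intro a v
        simp only [RingHom.id_apply, Submodule.coe_smul, ContinuousMap.coe_smul,
          Pi.smul_apply, smul_eq_mul, mul_left_comm, smul_eq_mul]
        exact integral_const_mul a _ }
  -- the submodule of functionals of the desired form
  let S : Submodule ℝ (Module.Dual ℝ V) :=
    { carrier := {φ | ∃ f : C(M, ℝ), HasCompactSupport f ∧ tsupport f ⊆ U ∧
        ∀ v : V, (∫ x, f x * (v : C(M, ℝ)) x ∂μ) = φ v}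
      zero_mem' := by
        have h0 : tsupport ⇑(0 : C(M, ℝ)) = ∅ := by simp [tsupport]
        refine ⟨0, ?_, ?_, fun v => by simp⟩
        · rw [HasCompactSupport, h0]; exact isCompact_empty
        · rw [h0]; exact Set.empty_subset _
      add_mem' := by
        rintro φ ψ ⟨f, hf, hfU, hfφ⟩ ⟨g, hg, hgU, hgψ⟩
        refine ⟨f + g, hf.add hg, ?_, ?_⟩
        · exact (closure_minimal ((Function.support_add _ _).trans
            (Set.union_subset_union subset_closure subset_closure))
            (isClosed_closure.union isClosed_closure)).trans (Set.union_subset hfU hgU)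
        · intro v
          have : (∫ x, (f + g) x * (v : C(M, ℝ)) x ∂μ)
              = (∫ x, f x * (v : C(M, ℝ)) x ∂μ) + ∫ x, g x * (v : C(M, ℝ)) x ∂μ := by
            simp only [ContinuousMap.add_apply, add_mul]
            exact integral_add (key f hf v) (key g hg v)
          rw [this, hfφ v, hgψ v]; rfl
      smul_mem' := by
        rintro c φ ⟨f, hf, hfU, hfφ⟩
        refine ⟨c • f, hf.smul_left, ?_, ?_⟩
        · exact (closure_mono (Function.support_smul_subset_right _ _)).trans hfU
        · intro v
          have : (∫ x, (c • f) x * (v : C(M, ℝ)) x ∂μ)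
              = c * ∫ x, f x * (v : C(M, ℝ)) x ∂μ := by
            simp only [ContinuousMap.coe_smul, Pi.smul_apply, smul_eq_mul, mul_assoc]
            exact integral_const_mul c _
          rw [this, hfφ v]; rfl }
  -- S = ⊤ via span_eq_top_of_ne_zero
  have hS : S = ⊤ := by
    have hspan := Submodule.span_eq_top_of_ne_zero (R := ℝ) (M := V)
      (s := (S : Set (Module.Dual ℝ V))) ?_
    · rwa [Submodule.span_eq] at hspan
    intro v hv
    -- find x ∈ U with v x ≠ 0
    obtain ⟨x, hxU, hvx⟩ : ∃ x ∈ U, (v : C(M, ℝ)) x ≠ 0 := by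
      by_contra h
      push_neg at h
      have hsub : U ⊆ interior {x : M | (v : C(M, ℝ)) x = 0} :=
        interior_maximal (fun x hx => h x hx) hU
      rw [hnodal v hv] at hsub
      exact hUne.ne_empty (Set.subset_empty_iff.mp hsub)
    set c := (v : C(M, ℝ)) x with hc
    -- open set where c * v > c^2/2 > 0
    set W : Set M := U ∩ {y | c ^ 2 / 2 < c * (v : C(M, ℝ)) y} with hWdef
    have hWopen : IsOpen W := hU.inter (isOpen_lt continuous_const
      (continuous_const.mul (v : C(M, ℝ)).continuous))
    have hc2 : (0 : ℝ) < c ^ 2 / 2 := by positivity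
    have hxW : x ∈ W := by
      refine ⟨hxU, ?_⟩
      simp only [Set.mem_setOf_eq, ← hc]
      nlinarith [sq_nonneg c]
    obtain ⟨K, hK, hxK, hKW⟩ := exists_compact_subset hWopen hxW
    obtain ⟨k, hk, hKk, hkW⟩ := exists_compact_between hK hWopen hKW
    obtain ⟨f, hf1, hf0, hfc, hf01⟩ := exists_continuous_one_zero_of_isCompact hK
      isOpen_interior.isClosed_compl (disjoint_compl_right_iff.mpr hKk)
    have hsuppW : tsupport f ⊆ W := by
      have h1 : Function.support f ⊆ interior k := fun y hy => by
        by_contra hyk; exact hy (hf0 hyk)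
      exact ((closure_mono h1).trans
        (closure_minimal interior_subset hk.isClosed)).trans hkW
    have hsuppU : tsupport f ⊆ U := hsuppW.trans Set.inter_subset_left
    refine ⟨T f hfc, ⟨f, hfc, hsuppU, fun w => rfl⟩, ?_⟩
    -- positivity: ∫ c * (f · v) > 0
    have hnn : ∀ y, 0 ≤ c * (f y * (v : C(M, ℝ)) y) := by
      intro y
      by_cases hy : y ∈ W
      · have h1 : c ^ 2 / 2 < c * (v : C(M, ℝ)) y := hy.2
        have h2 : 0 ≤ f y := (hf01 y).1
        nlinarith
      · have : f y = 0 := by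
          by_contra hne
          exact hy (hsuppW (subset_closure hne))
        simp [this]
    have hint : Integrable (fun y => c * (f y * (v : C(M, ℝ)) y)) μ :=
      ((key f hfc v).const_mul c)
    have hpos : 0 < ∫ y, c * (f y * (v : C(M, ℝ)) y) ∂μ := by
      rw [integral_pos_iff_support_of_nonneg hnn hint]
      refine lt_of_lt_of_le (hfull (interior K) isOpen_interior ⟨x, hxK⟩) (measure_mono ?_)
      intro y hy
      have hyK : y ∈ K := interior_subset hy
      have hfy : f y = 1 := hf1 hyK
      have hyW : y ∈ W := hKW hyK
      have : c ^ 2 / 2 < c * (v : C(M, ℝ)) y := hyW.2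
      simp only [Function.mem_support, hfy, one_mul]
      nlinarith
    have heq : (∫ y, c * (f y * (v : C(M, ℝ)) y) ∂μ)
        = c * ∫ y, f y * (v : C(M, ℝ)) y ∂μ := integral_const_mul c _
    intro h0
    rw [heq] at hpos
    have : (∫ y, f y * (v : C(M, ℝ)) y ∂μ) = 0 := h0
    rw [this, mul_zero] at hpos
    exact lt_irrefl 0 hpos
  have hLS : L ∈ S := hS ▸ Submodule.mem_top
  exact hLS
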